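/- For the 6×6 complex matrices S with rows (1,−1,1,r₁,r₂,r₃), (−1,1,−1,−r₂,−r₃,−r₁), (1,−1,1,r₃,r₁,r₂), (r₁,−r₂,r₃,1,1,1), (r₂,−r₃,r₁,1,1,1), (r₃,−r₁,r₂,1,1,1) and T = diag(1, e^{2πi/3}, e^{4πi/3}, e^{−4πi/9}, e^{8πi/9}, e^{2πi/9}), one has (S·T)³ = p₊ · S², where p₊ = Σ_{k=0}^{5} S_{0k}² · T_{kk}. -/

import Mathlib

/-- `α = e^{iπ/9}`. -/
noncomputable def α : ℂ := Complex.exp (Real.pi * Complex.I / 9)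

noncomputable def r₁ : ℂ := -α - α ^ 2 + α ^ 5
noncomputable def r₂ : ℂ := α + α ^ 2 - α ^ 4
noncomputable def r₃ : ℂ := α ^ 4 - α ^ 5

/-- The 6×6 matrix with rows `(1,−1,1,r₁,r₂,r₃)`, `(−1,1,−1,−r₂,−r₃,−r₁)`,
`(1,−1,1,r₃,r₁,r₂)`, `(r₁,−r₂,r₃,1,1,1)`, `(r₂,−r₃,r₁,1,1,1)`, `(r₃,−r₁,r₂,1,1,1)`. -/
noncomputable def S : Matrix (Fin 6) (Fin 6) ℂ :=
  !![1, -1, 1, r₁, r₂, r₃;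
     -1, 1, -1, -r₂, -r₃, -r₁;
     1, -1, 1, r₃, r₁, r₂;
     r₁, -r₂, r₃, 1, 1, 1;
     r₂, -r₃, r₁, 1, 1, 1;
     r₃, -r₁, r₂, 1, 1, 1]

/-- `T = diag(1, e^{2πi/3}, e^{4πi/3}, e^{−4πi/9}, e^{8πi/9}, e^{2πi/9})`. -/
noncomputable def T : Matrix (Fin 6) (Fin 6) ℂ :=
  Matrix.diagonal ![1, Complex.exp (2 * Real.pi * Complex.I / 3),
    Complex.exp (4 * Real.pi * Complex.I / 3),
    Complex.exp (-4 * Real.pi * Complex.I / 9),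
    Complex.exp (8 * Real.pi * Complex.I / 9),
    Complex.exp (2 * Real.pi * Complex.I / 9)]

/-- `p₊ = Σ_k S_{0k}² T_{kk}`. -/
noncomputable def pPlus : ℂ := ∑ k : Fin 6, (S 0 k) ^ 2 * T k k

/-!
`α` is a primitive 18th root of unity, so `α³` is a primitive 6th root of unity and `α` is a root
of `Φ₁₈ = Φ₆(X³) = X⁶ - X³ + 1`. The entries of `T` are powers of `α`, so every entry of both
sides lies in `ℤ[α]`, and `p₊ = -3α³`. Entry by entry, the identity is therefore a congruence of
integer polynomials in `α` modulo `X⁶ - X³ + 1`.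
-/

open Complex Matrix Polynomial Real

theorem IsPrimitiveRoot.pow_six_sub_pow_three_add_one_eq_zero {R : Type*} [CommRing R] [IsDomain R]
    {ζ : R} (hζ : IsPrimitiveRoot ζ 18) : ζ ^ 6 - ζ ^ 3 + 1 = 0 := by
  have h6 : IsPrimitiveRoot (ζ ^ 3) 6 := hζ.pow_of_dvd (by norm_num) (by norm_num)
  simpa [cyclotomic_six, ← pow_mul] using h6.isRoot_cyclotomic (by norm_num)

lemma isPrimitiveRoot_α : IsPrimitiveRoot α 18 := by
  have hα : α = cexp (2 * π * I / (18 : ℕ)) := by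
    rw [α]; push_cast; ring_nf
  exact hα ▸ Complex.isPrimitiveRoot_exp 18 (by norm_num)

lemma cexp_eq_α_pow {z : ℂ} (n : ℕ) (hz : z = n * (π * I / 9)) : cexp z = α ^ n := by
  rw [hz, Complex.exp_nat_mul, α]

lemma T_eq : T = diagonal ![1, α ^ 6, α ^ 12, α ^ 14, α ^ 8, α ^ 2] := by
  rw [T, (Complex.exp_eq_exp_iff_exists_int (x := -4 * π * I / 9) (y := 14 * π * I / 9)).mpr
      ⟨-1, by push_cast; ring⟩,
    cexp_eq_α_pow (z := 2 * π * I / 3) 6 (by push_cast; ring),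
    cexp_eq_α_pow (z := 4 * π * I / 3) 12 (by push_cast; ring),
    cexp_eq_α_pow (z := 14 * π * I / 9) 14 (by push_cast; ring),
    cexp_eq_α_pow (z := 8 * π * I / 9) 8 (by push_cast; ring),
    cexp_eq_α_pow (z := 2 * π * I / 9) 2 (by push_cast; ring)]

lemma pPlus_eq : pPlus = -3 * α ^ 3 := by
  have hα := isPrimitiveRoot_α.pow_six_sub_pow_three_add_one_eq_zero
  simp only [pPlus, T_eq, Fin.sum_univ_six, S, r₁, r₂, r₃, of_apply, diagonal_apply, Fin.isValue, cons_val,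
    ↓reduceIte]
  grind

theorem ST_cubed_eq : (S * T) ^ 3 = pPlus • S ^ 2 := by
  have hα := isPrimitiveRoot_α.pow_six_sub_pow_three_add_one_eq_zero
  rw [T_eq, pPlus_eq, pow_three, sq S]
  ext i j
  simp only [Matrix.mul_apply, Fin.sum_univ_six, Matrix.smul_apply, smul_eq_mul]
  fin_cases i <;> fin_cases j <;>
    simp only [S, r₁, r₂, r₃, of_apply, diagonal_apply, Fin.reduceFinMk, Fin.isValue, cons_val, Fin.reduceEq,
      ↓reduceIte] <;> grind
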